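/- arXiv:1405.7660 — 5 statements merged into one kernel-verified Lean document; each statement's English description precedes it below -/
import Mathlib

section
/- Existence of network solutions: on a finite connected graph with edge parameters D_{xy} = D_{yx} > 0 and γ_{xy} = 1/γ_{yx} > 0, for any nonempty boundary set W and any boundary values (U_x)_{x∈W}, there exists a solution (u, i), i.e. potentials and currents satisfying Ohm's law i_{xy} = D_{xy}(γ_{yx}u_x - γ_{xy}u_y) on edges, zero current divergence at all vertices outside W, and u_x = U_x on W. -/
open Finset

/-- existence of network solutions for any nonempty boundary set
and any boundary values. -/
theorem network_solution_exists {V : Type*} [Fintype V] [DecidableEq V]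
    (G : V → V → Prop) [DecidableRel G]
    (hGsym : ∀ x y, G x y → G y x)
    (hconn : ∀ x y : V, Relation.ReflTransGen G x y)
    (D γ : V → V → ℝ)
    (hDpos : ∀ x y, G x y → 0 < D x y)
    (hDsym : ∀ x y, D x y = D y x)
    (hγpos : ∀ x y, G x y → 0 < γ x y)
    (hγanti : ∀ x y, G x y → γ x y * γ y x = 1)
    (hγloop : ∀ x, G x x → γ x x = 1)
    (W : Finset V) (hW : W.Nonempty) (U : V → ℝ) :
    ∃ (u : V → ℝ) (i : V → V → ℝ),
      (∀ x y, G x y → i x y = D x y * (γ y x * u x - γ x y * u y)) ∧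
      (∀ x, x ∉ W → ∑ y ∈ univ.filter (fun y => G x y), i x y = 0) ∧
      (∀ x ∈ W, u x = U x) := by
  classical
  set S : V → ℝ := fun x => ∑ z ∈ univ.filter (fun z => G x z), D x z * γ z x with hS
  set A : Matrix V V ℝ := Matrix.of (fun x y =>
    if x ∈ W then (if y = x then (1:ℝ) else 0)
    else (if G x y then -(D x y * γ x y) else 0) + (if y = x then S x else 0)) with hA
  -- column equations for a vector in the kernel of vecMul
  have hcol : ∀ (v : V → ℝ) (y : V), (A.vecMul v) y =
      (if y ∈ W then v y else v y * S y)
        - ∑ x ∈ univ.filter (fun x => x ∉ W ∧ G x y), v x * (D x y * γ x y) := by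
    intro v y
    have hterm : ∀ x, v x * A x y =
        (if y = x then (if x ∈ W then v x else 0) else 0)
        + (if y = x then (if x ∉ W then v x * S x else 0) else 0)
        - (if x ∉ W ∧ G x y then v x * (D x y * γ x y) else 0) := by
      intro x
      rcases eq_or_ne y x with rfl | hxy
      · by_cases hx : y ∈ W <;> by_cases hg : G y y <;>
          simp [hA, hx, hg, Matrix.of_apply] <;> ring
      · by_cases hx : x ∈ W <;> by_cases hg : G x y <;>
          simp [hA, hx, hg, hxy, Matrix.of_apply] <;> ring
    have : (A.vecMul v) y = ∑ x, v x * A x y := by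
      simp [Matrix.vecMul, dotProduct]
    rw [this]
    calc ∑ x, v x * A x y
        = ∑ x, ((if y = x then (if x ∈ W then v x else 0) else 0)
            + (if y = x then (if x ∉ W then v x * S x else 0) else 0)
            - (if x ∉ W ∧ G x y then v x * (D x y * γ x y) else 0)) := by
          exact Finset.sum_congr rfl (fun x _ => hterm x)
      _ = (if y ∈ W then v y else v y * S y)
            - ∑ x ∈ univ.filter (fun x => x ∉ W ∧ G x y), v x * (D x y * γ x y) := by
          rw [Finset.sum_sub_distrib, Finset.sum_add_distrib,
            Finset.sum_ite_eq univ y, Finset.sum_ite_eq univ y, ← Finset.sum_filter]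
          by_cases hy : y ∈ W <;> simp [hy]
  -- key: vecMul has trivial kernel
  have hker : ∀ v : V → ℝ, A.vecMul v = 0 → v = 0 := by
    intro v hv
    have eqn : ∀ y, (if y ∈ W then v y else v y * S y) =
        ∑ x ∈ univ.filter (fun x => x ∉ W ∧ G x y), v x * (D x y * γ x y) := by
      intro y
      have h0 := congrFun hv y
      rw [hcol v y] at h0
      simp only [Pi.zero_apply] at h0
      linarith
    -- interior values vanish, by a maximum principle
    have hint : ∀ x, x ∉ W → v x = 0 := by
      by_contra hcon
      push_neg at hcon
      obtain ⟨x₀, hx₀W, hx₀⟩ := hcon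
      have hTne : (univ.filter (fun x => x ∉ W)).Nonempty :=
        ⟨x₀, by simp [hx₀W]⟩
      obtain ⟨y₀, hy₀T, hy₀max⟩ :=
        Finset.exists_max_image (univ.filter (fun x => x ∉ W)) (fun x => |v x|) hTne
      have hy₀W : y₀ ∉ W := by simpa using hy₀T
      set M : ℝ := |v y₀| with hM
      have hMpos : 0 < M := by
        have := hy₀max x₀ (by simp [hx₀W])
        have : |v x₀| ≤ M := this
        have h0 : 0 < |v x₀| := abs_pos.mpr hx₀
        linarith
      set ε : ℝ := if 0 ≤ v y₀ then 1 else -1 with hε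
      set w : V → ℝ := fun x => ε * v x with hw
      have hwy₀ : w y₀ = M := by
        by_cases h : 0 ≤ v y₀
        · simp only [hw, hε, if_pos h, one_mul, hM]
          exact (abs_of_nonneg h).symm
        · push_neg at h
          simp only [hw, hε, if_neg (not_le.mpr h), hM, abs_of_neg h]
          ring
      have hwabs : ∀ a, a ∉ W → |w a| ≤ M := by
        intro a ha
        have h1 : |v a| ≤ M := hy₀max a (by simp [ha])
        have : |w a| = |v a| := by
          by_cases h : 0 ≤ v y₀ <;> simp [hw, hε, h, abs_mul]
        linarith [this]
      have eqw : ∀ y, y ∉ W → w y * S y =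
          ∑ x ∈ univ.filter (fun x => x ∉ W ∧ G x y), w x * (D x y * γ x y) := by
        intro y hy
        have := eqn y
        rw [if_neg hy] at this
        calc w y * S y = ε * (v y * S y) := by rw [hw]; ring
          _ = ε * ∑ x ∈ univ.filter (fun x => x ∉ W ∧ G x y), v x * (D x y * γ x y) := by
              rw [this]
          _ = ∑ x ∈ univ.filter (fun x => x ∉ W ∧ G x y), w x * (D x y * γ x y) := by
              rw [Finset.mul_sum]
              exact Finset.sum_congr rfl (fun x _ => by rw [hw]; ring)
      -- propagation step
      have step : ∀ z, z ∉ W → w z = M → ∀ z', G z z' → z' ∉ W ∧ w z' = M := by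
        intro z hzW hzM z' hzz'
        have hN' : univ.filter (fun x => x ∉ W ∧ G x z)
            = (univ.filter (fun x => G z x)).filter (fun x => x ∉ W) := by
          ext x
          simp only [Finset.mem_filter, Finset.mem_univ, true_and]
          constructor
          · rintro ⟨h1, h2⟩; exact ⟨hGsym _ _ h2, h1⟩
          · rintro ⟨h1, h2⟩; exact ⟨h2, hGsym _ _ h1⟩
        have hSz : S z = ∑ x ∈ univ.filter (fun x => G z x), D x z * γ x z := by
          rw [hS]
          exact Finset.sum_congr rfl (fun x hx => by rw [hDsym])
        have hzero : ∑ x ∈ univ.filter (fun x => G z x),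
            (M - (if x ∉ W then w x else 0)) * (D x z * γ x z) = 0 := by
          have hrw : ∑ x ∈ univ.filter (fun x => G z x),
              (if x ∉ W then w x else 0) * (D x z * γ x z)
              = ∑ x ∈ univ.filter (fun x => x ∉ W ∧ G x z), w x * (D x z * γ x z) := by
            rw [hN', Finset.sum_filter (fun x => x ∉ W)
              (fun x => w x * (D x z * γ x z))]
            exact Finset.sum_congr rfl (fun x hx => by
              by_cases h : x ∉ W
              · rw [if_pos h, if_pos h]
              · rw [if_neg h, if_neg h, zero_mul])
          have := eqw z hzW
          rw [hzM] at this
          calc ∑ x ∈ univ.filter (fun x => G z x),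
                (M - (if x ∉ W then w x else 0)) * (D x z * γ x z)
              = M * S z - ∑ x ∈ univ.filter (fun x => G z x),
                  (if x ∉ W then w x else 0) * (D x z * γ x z) := by
                rw [hSz, Finset.mul_sum, ← Finset.sum_sub_distrib]
                exact Finset.sum_congr rfl (fun x hx => by ring)
            _ = 0 := by rw [hrw, this]; exact sub_self _
        have hnonneg : ∀ x ∈ univ.filter (fun x => G z x),
            0 ≤ (M - (if x ∉ W then w x else 0)) * (D x z * γ x z) := by
          intro x hx
          have hg : G z x := by simpa using hx
          have hgx : G x z := hGsym _ _ hg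
          have hc : 0 < D x z * γ x z := mul_pos (hDpos _ _ hgx) (hγpos _ _ hgx)
          apply mul_nonneg _ hc.le
          by_cases h : x ∉ W
          · rw [if_pos h]
            have h2 := (abs_le.mp (hwabs x h)).2
            linarith
          · rw [if_neg h]
            linarith
        have hall := (Finset.sum_eq_zero_iff_of_nonneg hnonneg).mp hzero
        have hz' : z' ∈ univ.filter (fun x => G z x) := by simp [hzz']
        have := hall z' hz'
        have hgz' : G z' z := hGsym _ _ hzz'
        have hc : 0 < D z' z * γ z' z := mul_pos (hDpos _ _ hgz') (hγpos _ _ hgz')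
        have hMe : M - (if z' ∉ W then w z' else 0) = 0 := by
          rcases mul_eq_zero.mp this with h | h
          · exact h
          · exact absurd h hc.ne'
        by_cases h : z' ∉ W
        · rw [if_pos h] at hMe
          exact ⟨h, by linarith⟩
        · rw [if_neg h] at hMe
          simp at hMe
          exact absurd hMe hMpos.ne'
      -- propagate along connectivity to a boundary vertex
      obtain ⟨w₀, hw₀⟩ := hW
      have hreach : ∀ z, Relation.ReflTransGen G y₀ z → z ∉ W ∧ w z = M := by
        intro z hz
        induction hz with
        | refl => exact ⟨hy₀W, hwy₀⟩
        | tail hab hbc ih => exact step _ ih.1 ih.2 _ hbc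
      exact (hreach w₀ (hconn y₀ w₀)).1 hw₀
    -- boundary values vanish too
    funext y
    by_cases hy : y ∈ W
    · have := eqn y
      rw [if_pos hy] at this
      rw [this]
      simp only [Pi.zero_apply]
      apply Finset.sum_eq_zero
      intro x hx
      have hxW : x ∉ W := by
        simp only [Finset.mem_filter, Finset.mem_univ, true_and] at hx
        exact hx.1
      rw [hint x hxW]; ring
    · have := eqn y
      rw [if_neg hy] at this
      have := hint y hy
      simp [this]
  -- A is invertible, hence mulVec surjective
  have hinj : Function.Injective A.vecMul := by
    intro a b hab
    have hab' : Matrix.vecMul a A = Matrix.vecMul b A := hab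
    have h0 : Matrix.vecMul (a - b) A = 0 := by
      rw [Matrix.sub_vecMul, hab', sub_self]
    have h1 := hker _ h0
    funext x
    have h2 := congrFun h1 x
    simp only [Pi.sub_apply, Pi.zero_apply, sub_eq_zero] at h2
    exact h2
  have hunit : IsUnit A := Matrix.vecMul_injective_iff_isUnit.mp hinj
  have hsurj : Function.Surjective A.mulVec := Matrix.mulVec_surjective_iff_isUnit.mpr hunit
  obtain ⟨u, hu⟩ := hsurj (fun x => if x ∈ W then U x else 0)
  -- row computation for mulVec
  have hrow : ∀ x, (A.mulVec u) x =
      if x ∈ W then u x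
      else ∑ y ∈ univ.filter (fun y => G x y), D x y * (γ y x * u x - γ x y * u y) := by
    intro x
    have : (A.mulVec u) x = ∑ y, A x y * u y := by
      simp [Matrix.mulVec, dotProduct]
    rw [this]
    by_cases hx : x ∈ W
    · rw [if_pos hx]
      calc ∑ y, A x y * u y = ∑ y, (if y = x then u y else 0) := by
            exact Finset.sum_congr rfl (fun y _ => by
              by_cases h : y = x <;> simp [hA, hx, h])
        _ = u x := by rw [Finset.sum_ite_eq' univ x]; simp
    · rw [if_neg hx]
      have hterm : ∀ y, A x y * u y =
          (if G x y then -(D x y * γ x y * u y) else 0)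
          + (if y = x then S x * u y else 0) := by
        intro y
        rcases eq_or_ne y x with rfl | hxy
        · by_cases hg : G y y <;> simp [hA, hx, hg, Matrix.of_apply] <;> ring
        · by_cases hg : G x y <;> simp [hA, hx, hg, hxy, Matrix.of_apply] <;> ring
      calc ∑ y, A x y * u y
          = ∑ y, ((if G x y then -(D x y * γ x y * u y) else 0)
              + (if y = x then S x * u y else 0)) :=
            Finset.sum_congr rfl (fun y _ => hterm y)
        _ = (∑ y ∈ univ.filter (fun y => G x y), -(D x y * γ x y * u y)) + S x * u x := by
            rw [Finset.sum_add_distrib, ← Finset.sum_filter, Finset.sum_ite_eq' univ x]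
            simp
        _ = ∑ y ∈ univ.filter (fun y => G x y), D x y * (γ y x * u x - γ x y * u y) := by
            rw [hS, Finset.sum_mul, ← Finset.sum_add_distrib]
            exact Finset.sum_congr rfl (fun y hy => by ring)
  refine ⟨u, fun x y => D x y * (γ y x * u x - γ x y * u y), fun x y _ => rfl, ?_, ?_⟩
  · intro x hx
    have := congrFun hu x
    rw [hrow x, if_neg hx] at this
    rw [this, if_neg hx]
  · intro x hx
    have := congrFun hu x
    rw [hrow x, if_pos hx] at this
    rw [this, if_pos hx]
end

section
/- Absorption probabilities as potentials: set up the electric network from a Markov chain via D_{xy} = √(μ_x P_{xy} μ_y P_{yx}), γ_{xy} = √(μ_x P_{xy}/(μ_y P_{yx})). With disjoint nonempty sets A, B held at potentials U_A = 1 on A and U_B = 0 on B and all other vertices free, the unique solution potentials satisfy u_x = P_x{τ_A^0 < τ_B^0} for every x ∈ V, the probability that the chain started at x reaches A before B. -/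
/-!
The reversible-network conductances are chosen so that `D x y * γ y x = μ y * P y x`, hence Ohm's
law makes the current `i x y` equal to `μ y P y x u x - μ x P x y u y`. Summing over `y` and using
stationarity of `μ`, Kirchhoff's law at `x` becomes `μ x (u x - ∑ y, P x y u y) = 0`: the potential
is `P`-harmonic off `A ∪ B`. Both `u` and the absorption probabilities `h` are then harmonic off
`A ∪ B` with the same boundary values, so they coincide by the maximum principle on the connected
graph.
-/

open Finset

theorem Real.sqrt_mul_mul_sqrt_div {a b : ℝ} (ha : 0 < a) (hb : 0 ≤ b) :
    √(a * b) * √(b / a) = b := by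
  rw [← Real.sqrt_mul (by positivity), mul_comm a, mul_assoc, mul_div_cancel₀ _ ha.ne',
    Real.sqrt_mul_self hb]

section Harmonic

variable {V : Type*} [Fintype V]

def IsHarmonicOff (P : V → V → ℝ) (S : Finset V) (g : V → ℝ) : Prop :=
  ∀ x ∉ S, g x = ∑ y, P x y * g y

variable {P : V → V → ℝ} {S : Finset V} {g g₁ g₂ : V → ℝ}

theorem IsHarmonicOff.sub (h₁ : IsHarmonicOff P S g₁) (h₂ : IsHarmonicOff P S g₂) :
    IsHarmonicOff P S (g₁ - g₂) := by
  intro x hx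
  simp only [Pi.sub_apply, mul_sub, sum_sub_distrib, ← h₁ x hx, ← h₂ x hx]

/-- A mean of values `≤ g x` that equals `g x` has all its positively weighted terms equal
to `g x`. -/
theorem IsHarmonicOff.eq_of_forall_le_of_pos (hg : IsHarmonicOff P S g)
    (hPnn : ∀ x y, 0 ≤ P x y) (hProw : ∀ x, ∑ y, P x y = 1)
    {x y : V} (hx : x ∉ S) (hmax : ∀ z, g z ≤ g x) (hxy : 0 < P x y) : g y = g x := by
  have hsum : ∑ z, P x z * (g x - g z) = 0 := by
    simp only [mul_sub, sum_sub_distrib, ← sum_mul, hProw, one_mul, ← hg x hx, sub_self]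
  have hterm := (sum_eq_zero_iff_of_nonneg fun z _ =>
    mul_nonneg (hPnn x z) (sub_nonneg.2 (hmax z))).1 hsum y (mem_univ y)
  linarith [(mul_eq_zero.1 hterm).resolve_left hxy.ne']

theorem IsHarmonicOff.exists_mem_forall_le (hg : IsHarmonicOff P S g)
    (hconn : ∀ x y, Relation.ReflTransGen (fun x y => 0 < P x y) x y)
    (hPnn : ∀ x y, 0 ≤ P x y) (hProw : ∀ x, ∑ y, P x y = 1) (hS : S.Nonempty) :
    ∃ s ∈ S, ∀ x, g x ≤ g s := by
  obtain ⟨a, ha⟩ := hS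
  obtain ⟨m, -, hm⟩ := exists_max_image univ g ⟨a, mem_univ a⟩
  replace hm : ∀ x, g x ≤ g m := fun x => hm x (mem_univ x)
  suffices ∀ z, Relation.ReflTransGen (fun x y => 0 < P x y) z a → g z = g m →
      ∃ s ∈ S, g s = g m by
    obtain ⟨s, hs, hsm⟩ := this m (hconn m a) rfl
    exact ⟨s, hs, fun x => hsm ▸ hm x⟩
  intro z hz
  induction hz using Relation.ReflTransGen.head_induction_on with
  | refl => exact fun hzm => ⟨a, ha, hzm⟩
  | @head z w hzw _ ih =>
    intro hzm
    by_cases hzS : z ∈ S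
    · exact ⟨z, hzS, hzm⟩
    · exact ih ((hg.eq_of_forall_le_of_pos hPnn hProw hzS (hzm ▸ hm) hzw).trans hzm)

theorem IsHarmonicOff.le_of_forall_mem_le (hg : IsHarmonicOff P S g)
    (hconn : ∀ x y, Relation.ReflTransGen (fun x y => 0 < P x y) x y)
    (hPnn : ∀ x y, 0 ≤ P x y) (hProw : ∀ x, ∑ y, P x y = 1) (hS : S.Nonempty)
    (hgS : ∀ s ∈ S, g s ≤ 0) (x : V) : g x ≤ 0 := by
  obtain ⟨s, hs, hmax⟩ := hg.exists_mem_forall_le hconn hPnn hProw hS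
  exact (hmax x).trans (hgS s hs)

theorem IsHarmonicOff.eq_of_forall_mem_eq (h₁ : IsHarmonicOff P S g₁)
    (h₂ : IsHarmonicOff P S g₂)
    (hconn : ∀ x y, Relation.ReflTransGen (fun x y => 0 < P x y) x y)
    (hPnn : ∀ x y, 0 ≤ P x y) (hProw : ∀ x, ∑ y, P x y = 1) (hS : S.Nonempty)
    (hboundary : ∀ s ∈ S, g₁ s = g₂ s) (x : V) : g₁ x = g₂ x := by
  have hle := (h₁.sub h₂).le_of_forall_mem_le hconn hPnn hProw hS
    (fun s hs => by simp [hboundary s hs]) x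
  have hge := (h₂.sub h₁).le_of_forall_mem_le hconn hPnn hProw hS
    (fun s hs => by simp [hboundary s hs]) x
  simp only [Pi.sub_apply] at hle hge
  linarith

end Harmonic

theorem isHarmonicOff_of_kirchhoff {V : Type*} [Fintype V] {G : V → V → Prop} [DecidableRel G]
    (hGsym : ∀ x y, G x y → G y x) {P : V → V → ℝ} {μ : V → ℝ}
    (hPzero : ∀ x y, ¬ G x y → P x y = 0) (hμpos : ∀ x, 0 < μ x)
    (hstat : ∀ y, ∑ x, μ x * P x y = μ y) {S : Finset V} {u : V → ℝ} {i : V → V → ℝ}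
    (hcurrent : ∀ x y, G x y → i x y = μ y * P y x * u x - μ x * P x y * u y)
    (hkir : ∀ x, x ∉ S → ∑ y ∈ univ.filter (fun y => G x y), i x y = 0) :
    IsHarmonicOff P S u := by
  intro x hx
  have hvanish : ∀ y, ¬ G x y → μ y * P y x * u x - μ x * P x y * u y = 0 := fun y hG => by
    rw [hPzero x y hG, hPzero y x (mt (hGsym y x) hG)]
    ring
  have hflow : ∑ y, (μ y * P y x * u x - μ x * P x y * u y) = 0 := by
    rw [← hkir x hx, ← sum_filter_of_ne fun y _ hy => not_not.1 (mt (hvanish y) hy)]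
    exact sum_congr rfl fun y hy => (hcurrent x y (mem_filter.1 hy).2).symm
  rw [sum_sub_distrib, ← sum_mul, hstat, sub_eq_zero] at hflow
  refine mul_left_cancel₀ (hμpos x).ne' (hflow.trans ?_)
  simp only [mul_sum, mul_assoc]

theorem potentials_are_absorption_probabilities_general {V : Type*} [Fintype V] [DecidableEq V]
    (G : V → V → Prop) [DecidableRel G]
    (hGsym : ∀ x y, G x y → G y x)
    (hconn : ∀ x y : V, Relation.ReflTransGen G x y)
    (P : V → V → ℝ) (μ : V → ℝ)
    (hPpos : ∀ x y, G x y → 0 < P x y)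
    (hPzero : ∀ x y, ¬ G x y → P x y = 0)
    (hProw : ∀ x, ∑ y, P x y = 1)
    (hμpos : ∀ x, 0 < μ x)
    (hstat : ∀ y, ∑ x, μ x * P x y = μ y)
    (D γ : V → V → ℝ)
    (hD : ∀ x y, D x y = Real.sqrt (μ x * P x y * (μ y * P y x)))
    (hγ : ∀ x y, γ x y = Real.sqrt (μ x * P x y / (μ y * P y x)))
    (A B : Finset V) (hA : A.Nonempty)
    -- the absorption probabilities h_x = P_x{τ_A⁰ < τ_B⁰}
    (h : V → ℝ)
    (hhA : ∀ x ∈ A, h x = 1) (hhB : ∀ x ∈ B, h x = 0)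
    (hharm : ∀ x, x ∉ A ∪ B → h x = ∑ y, P x y * h y)
    -- the network solution with boundary potentials 1 on A, 0 on B
    (u : V → ℝ) (i : V → V → ℝ)
    (hohm : ∀ x y, G x y → i x y = D x y * (γ y x * u x - γ x y * u y))
    (hkir : ∀ x, x ∉ A ∪ B → ∑ y ∈ univ.filter (fun y => G x y), i x y = 0)
    (huA : ∀ x ∈ A, u x = 1) (huB : ∀ x ∈ B, u x = 0) :
    ∀ x, u x = h x := by
  have hPnn : ∀ x y, 0 ≤ P x y := fun x y =>
    (em (G x y)).elim (fun hG => (hPpos x y hG).le) fun hG => (hPzero x y hG).ge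
  have hcurrent : ∀ x y, G x y → i x y = μ y * P y x * u x - μ x * P x y * u y := by
    intro x y hxy
    have hxy' := mul_pos (hμpos x) (hPpos x y hxy)
    have hyx' := mul_pos (hμpos y) (hPpos y x (hGsym x y hxy))
    have hforward : D x y * γ y x = μ y * P y x := by
      rw [hD, hγ]
      exact Real.sqrt_mul_mul_sqrt_div hxy' hyx'.le
    have hbackward : D x y * γ x y = μ x * P x y := by
      rw [hD, hγ, mul_comm (μ x * P x y)]
      exact Real.sqrt_mul_mul_sqrt_div hyx' hxy'.le
    rw [hohm x y hxy]
    linear_combination u x * hforward - u y * hbackward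
  have hu : IsHarmonicOff P (A ∪ B) u :=
    isHarmonicOff_of_kirchhoff hGsym hPzero hμpos hstat hcurrent hkir
  have hboundary : ∀ x ∈ A ∪ B, u x = h x := by
    intro x hx
    rcases mem_union.1 hx with hxA | hxB
    · rw [huA x hxA, hhA x hxA]
    · rw [huB x hxB, hhB x hxB]
  have hconnP : ∀ x y, Relation.ReflTransGen (fun x y => 0 < P x y) x y := fun x y =>
    Relation.ReflTransGen.mono hPpos _ _ (hconn x y)
  exact hu.eq_of_forall_mem_eq hharm hconnP hPnn hProw (hA.mono subset_union_left) hboundary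

/-- the network potentials with boundary 1 on `A`, 0 on `B` equal the
absorption probabilities `h_x = P_x{τ_A⁰ < τ_B⁰}`, characterised as the unique
function that is 1 on `A`, 0 on `B`, and harmonic for `P` elsewhere. -/
theorem potentials_are_absorption_probabilities {V : Type*} [Fintype V] [DecidableEq V]
    (G : V → V → Prop) [DecidableRel G]
    (hGsym : ∀ x y, G x y → G y x)
    (hconn : ∀ x y : V, Relation.ReflTransGen G x y)
    (P : V → V → ℝ) (μ : V → ℝ)
    (hPpos : ∀ x y, G x y → 0 < P x y)
    (hPzero : ∀ x y, ¬ G x y → P x y = 0)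
    (hProw : ∀ x, ∑ y, P x y = 1)
    (hμpos : ∀ x, 0 < μ x)
    (hμsum : ∑ x, μ x = 1)
    (hstat : ∀ y, ∑ x, μ x * P x y = μ y)
    (D γ : V → V → ℝ)
    (hD : ∀ x y, D x y = Real.sqrt (μ x * P x y * (μ y * P y x)))
    (hγ : ∀ x y, γ x y = Real.sqrt (μ x * P x y / (μ y * P y x)))
    (A B : Finset V) (hA : A.Nonempty) (hB : B.Nonempty) (hAB : Disjoint A B)
    -- the absorption probabilities h_x = P_x{τ_A⁰ < τ_B⁰}
    (h : V → ℝ)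
    (hhA : ∀ x ∈ A, h x = 1) (hhB : ∀ x ∈ B, h x = 0)
    (hharm : ∀ x, x ∉ A ∪ B → h x = ∑ y, P x y * h y)
    -- the network solution with boundary potentials 1 on A, 0 on B
    (u : V → ℝ) (i : V → V → ℝ)
    (hohm : ∀ x y, G x y → i x y = D x y * (γ y x * u x - γ x y * u y))
    (hkir : ∀ x, x ∉ A ∪ B → ∑ y ∈ univ.filter (fun y => G x y), i x y = 0)
    (huA : ∀ x ∈ A, u x = 1) (huB : ∀ x ∈ B, u x = 0) :
    ∀ x, u x = h x :=
  potentials_are_absorption_probabilities_general G hGsym hconn P μ hPpos hPzero hProw hμpos hstat D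
    γ hD hγ A B hA h hhA hhB hharm u i hohm hkir huA huB
end

section
/- Existence of effective resistance in a Markovian network: in a Markovian electric network (one satisfying Σ_{z∼x} D_{xz}γ_{xz} = Σ_{z∼x} D_{xz}γ_{zx} for all x), for any disjoint nonempty subsets A, B of V there is a constant R^eff_{AB} > 0 such that for all boundary potentials U_A, U_B ∈ ℝ, the solution with u ≡ U_A on A, u ≡ U_B on B, free elsewhere, has total incoming current i_A into A satisfying U_A - U_B = R^eff_{AB} · i_A. -/
open Finset

variable {V : Type*} [Fintype V] [DecidableEq V]

/-- A solution of the electric network with boundary set `W` and boundary values `U`. -/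
def IsNetworkSolution (G : V → V → Prop) [DecidableRel G] (D γ : V → V → ℝ)
    (W : Finset V) (U : V → ℝ) (u : V → ℝ) (i : V → V → ℝ) : Prop :=
  (∀ x y, G x y → i x y = D x y * (γ y x * u x - γ x y * u y)) ∧
  (∀ x, x ∉ W → ∑ y ∈ univ.filter (fun y => G x y), i x y = 0) ∧
  (∀ x ∈ W, u x = U x)

/-- If `u ≤ M` everywhere, `u x = M`, and `u` is "harmonic" at `x`, then `u = M`
on all neighbours of `x`. -/
lemma prop_max (G : V → V → Prop) [DecidableRel G] (D γ : V → V → ℝ)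
    (hDpos : ∀ x y, G x y → 0 < D x y)
    (hγpos : ∀ x y, G x y → 0 < γ x y)
    (hMarkovian : ∀ x, ∑ z ∈ univ.filter (fun z => G x z), D x z * γ x z =
      ∑ z ∈ univ.filter (fun z => G x z), D x z * γ z x)
    (u : V → ℝ) (M : ℝ) (hle : ∀ z, u z ≤ M) (x : V)
    (hx : ∑ y ∈ univ.filter (fun y => G x y), D x y * (γ y x * u x - γ x y * u y) = 0)
    (hxM : u x = M) : ∀ y, G x y → u y = M := by
  have h2 : ∑ y ∈ univ.filter (fun y => G x y), D x y * (γ y x * u x - γ x y * u y)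
      = (∑ y ∈ univ.filter (fun y => G x y), D x y * γ y x) * u x
        - ∑ y ∈ univ.filter (fun y => G x y), D x y * γ x y * u y := by
    rw [Finset.sum_mul, ← Finset.sum_sub_distrib]
    exact Finset.sum_congr rfl fun y _ => by ring
  have key : ∑ y ∈ univ.filter (fun y => G x y), D x y * γ x y * (M - u y) = 0 := by
    have h3 : ∑ y ∈ univ.filter (fun y => G x y), D x y * γ x y * (M - u y)
        = (∑ y ∈ univ.filter (fun y => G x y), D x y * γ x y) * M
          - ∑ y ∈ univ.filter (fun y => G x y), D x y * γ x y * u y := by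
      rw [Finset.sum_mul, ← Finset.sum_sub_distrib]
      exact Finset.sum_congr rfl fun y _ => by ring
    rw [h3, hMarkovian x]
    rw [h2, hxM] at hx
    linarith
  have hnn : ∀ y ∈ univ.filter (fun y => G x y), 0 ≤ D x y * γ x y * (M - u y) := by
    intro y hy
    rw [Finset.mem_filter] at hy
    exact mul_nonneg (mul_nonneg (hDpos x y hy.2).le (hγpos x y hy.2).le)
      (by linarith [hle y])
  intro y hG
  have := (Finset.sum_eq_zero_iff_of_nonneg hnn).mp key y
    (Finset.mem_filter.mpr ⟨Finset.mem_univ y, hG⟩)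
  have h1 : 0 < D x y * γ x y := mul_pos (hDpos x y hG) (hγpos x y hG)
  nlinarith [hle y]

/-- From a point of maximal value, the maximum is attained on the boundary. -/
lemma reach_boundary (G : V → V → Prop) [DecidableRel G]
    (W : Finset V) (u : V → ℝ) (M : ℝ)
    (hprop : ∀ x ∉ W, u x = M → ∀ y, G x y → u y = M)
    {x w0 : V} (h : Relation.ReflTransGen G x w0) (hw0 : w0 ∈ W) (hxM : u x = M) :
    ∃ w ∈ W, u w = M := by
  induction h using Relation.ReflTransGen.head_induction_on with
  | refl => exact ⟨w0, hw0, hxM⟩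
  | @head a c hac _ ih =>
    by_cases hmem : a ∈ W
    · exact ⟨a, hmem, hxM⟩
    · exact ih (hprop a hmem hxM c hac)

/-- The maximum principle: the maximum of a harmonic function is attained on the
(nonempty) boundary. -/
lemma le_boundary_max (G : V → V → Prop) [DecidableRel G] (D γ : V → V → ℝ)
    (hconn : ∀ x y : V, Relation.ReflTransGen G x y)
    (hDpos : ∀ x y, G x y → 0 < D x y)
    (hγpos : ∀ x y, G x y → 0 < γ x y)
    (hMarkovian : ∀ x, ∑ z ∈ univ.filter (fun z => G x z), D x z * γ x z =
      ∑ z ∈ univ.filter (fun z => G x z), D x z * γ z x)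
    (W : Finset V) (hW : W.Nonempty) (u : V → ℝ)
    (hharm : ∀ x ∉ W,
      ∑ y ∈ univ.filter (fun y => G x y), D x y * (γ y x * u x - γ x y * u y) = 0) :
    ∃ w ∈ W, ∀ z, u z ≤ u w := by
  obtain ⟨w1, hw1⟩ := hW
  obtain ⟨x0, -, hx0⟩ := Finset.exists_max_image (univ : Finset V) u ⟨w1, mem_univ w1⟩
  have hle : ∀ z, u z ≤ u x0 := fun z => hx0 z (mem_univ z)
  have hprop : ∀ x ∉ W, u x = u x0 → ∀ y, G x y → u y = u x0 := fun x hx hxM =>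
    prop_max G D γ hDpos hγpos hMarkovian u (u x0) hle x (hharm x hx) hxM
  obtain ⟨w, hwW, hwM⟩ := reach_boundary G W u (u x0) hprop (hconn x0 w1) hw1 rfl
  exact ⟨w, hwW, fun z => hwM ▸ hle z⟩

/-- A harmonic function vanishing on the boundary vanishes everywhere. -/
lemma zero_boundary (G : V → V → Prop) [DecidableRel G] (D γ : V → V → ℝ)
    (hconn : ∀ x y : V, Relation.ReflTransGen G x y)
    (hDpos : ∀ x y, G x y → 0 < D x y)
    (hγpos : ∀ x y, G x y → 0 < γ x y)
    (hMarkovian : ∀ x, ∑ z ∈ univ.filter (fun z => G x z), D x z * γ x z =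
      ∑ z ∈ univ.filter (fun z => G x z), D x z * γ z x)
    (W : Finset V) (hW : W.Nonempty) (u : V → ℝ)
    (hharm : ∀ x ∉ W,
      ∑ y ∈ univ.filter (fun y => G x y), D x y * (γ y x * u x - γ x y * u y) = 0)
    (hbd : ∀ w ∈ W, u w = 0) : ∀ z, u z = 0 := by
  have hharm' : ∀ x ∉ W,
      ∑ y ∈ univ.filter (fun y => G x y),
        D x y * (γ y x * (-u x) - γ x y * (-u y)) = 0 := by
    intro x hx
    have : ∑ y ∈ univ.filter (fun y => G x y), D x y * (γ y x * (-u x) - γ x y * (-u y))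
        = -∑ y ∈ univ.filter (fun y => G x y), D x y * (γ y x * u x - γ x y * u y) := by
      rw [← Finset.sum_neg_distrib]
      exact Finset.sum_congr rfl fun y _ => by ring
    rw [this, hharm x hx, neg_zero]
  obtain ⟨w, hwW, hwM⟩ := le_boundary_max G D γ hconn hDpos hγpos hMarkovian W hW u hharm
  obtain ⟨w', hw'W, hw'M⟩ := le_boundary_max G D γ hconn hDpos hγpos hMarkovian W hW
    (fun z => -u z) hharm'
  intro z
  have h1 := hwM z
  have h2 := hw'M z
  have h3 := hbd w hwW
  have h4 := hbd w' hw'W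
  rw [h3] at h1
  rw [h4] at h2
  linarith

/-- in a Markovian network there is an effective resistance
`R^eff_{AB} > 0` with `U_A - U_B = R^eff_{AB} · i_A` for all boundary potentials. -/
theorem effective_resistance_exists
    (G : V → V → Prop) [DecidableRel G]
    (hGsym : ∀ x y, G x y → G y x)
    (hconn : ∀ x y : V, Relation.ReflTransGen G x y)
    (D γ : V → V → ℝ)
    (hDpos : ∀ x y, G x y → 0 < D x y)
    (hDsym : ∀ x y, D x y = D y x)
    (hγpos : ∀ x y, G x y → 0 < γ x y)
    (hγanti : ∀ x y, G x y → γ x y * γ y x = 1)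
    (hγloop : ∀ x, G x x → γ x x = 1)
    (hMarkovian : ∀ x, ∑ z ∈ univ.filter (fun z => G x z), D x z * γ x z =
      ∑ z ∈ univ.filter (fun z => G x z), D x z * γ z x)
    (A B : Finset V) (hA : A.Nonempty) (hB : B.Nonempty) (hAB : Disjoint A B)
    (hex : ∀ U' : V → ℝ, ∃ u i, IsNetworkSolution G D γ (A ∪ B) U' u i) :
    ∃ Reff : ℝ, 0 < Reff ∧
      ∀ (UA UB : ℝ) (u : V → ℝ) (i : V → V → ℝ),
        IsNetworkSolution G D γ (A ∪ B) (fun x => if x ∈ A then UA else UB) u i →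
        UA - UB = Reff * ∑ x ∈ A, ∑ y ∈ univ.filter (fun y => G x y), i x y := by
  classical
  set W : Finset V := A ∪ B with hWdef
  have hWne : W.Nonempty := hA.mono Finset.subset_union_left
  obtain ⟨a0, ha0⟩ := hA
  obtain ⟨b0, hb0⟩ := hB
  -- a reference solution with boundary values 1 on A, 0 on B
  obtain ⟨u0, i0, hohm0, hkir0, hbd0⟩ := hex (fun x => if x ∈ A then 1 else 0)
  -- u0 values on the boundary
  have hu0A : ∀ x ∈ A, u0 x = 1 := fun x hx => by
    simpa [hx] using hbd0 x (Finset.mem_union_left B hx)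
  have hu0B : ∀ x ∈ B, u0 x = 0 := fun x hx => by
    have hxA : x ∉ A := fun h' => Finset.disjoint_left.mp hAB h' hx
    simpa [hxA] using hbd0 x (Finset.mem_union_right A hx)
  -- harmonicity of u0 off W
  have hharm0 : ∀ x ∉ W,
      ∑ y ∈ univ.filter (fun y => G x y), D x y * (γ y x * u0 x - γ x y * u0 y) = 0 := by
    intro x hx
    rw [← hkir0 x hx]
    exact (Finset.sum_congr rfl fun y hy =>
      (hohm0 x y (Finset.mem_filter.mp hy).2).symm)
  -- u0 ≤ 1 everywhere
  have hu0le : ∀ z, u0 z ≤ 1 := by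
    obtain ⟨w, hwW, hwM⟩ := le_boundary_max G D γ hconn hDpos hγpos hMarkovian
      W hWne u0 hharm0
    intro z
    have : u0 w ≤ 1 := by
      rw [hbd0 w hwW]
      by_cases h : w ∈ A <;> simp [h]
    exact le_trans (hwM z) this
  -- the total current out of A for the reference solution
  set I0 : ℝ := ∑ x ∈ A, ∑ y ∈ univ.filter (fun y => G x y), i0 x y with hI0def
  -- rewrite I0 as a sum of nonnegative terms
  have hI0eq : I0 = ∑ x ∈ A, ∑ y ∈ univ.filter (fun y => G x y),
      D x y * γ x y * (1 - u0 y) := by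
    refine Finset.sum_congr rfl fun x hxA => ?_
    have h1 : ∑ y ∈ univ.filter (fun y => G x y), i0 x y
        = (∑ y ∈ univ.filter (fun y => G x y), D x y * γ y x)
          - ∑ y ∈ univ.filter (fun y => G x y), D x y * γ x y * u0 y := by
      rw [← Finset.sum_sub_distrib]
      refine Finset.sum_congr rfl fun y hy => ?_
      rw [hohm0 x y (Finset.mem_filter.mp hy).2, hu0A x hxA]
      ring
    rw [h1, ← hMarkovian x, ← Finset.sum_sub_distrib]
    exact Finset.sum_congr rfl fun y _ => by ring
  have hterm_nn : ∀ x ∈ A, ∀ y ∈ univ.filter (fun y => G x y),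
      0 ≤ D x y * γ x y * (1 - u0 y) := by
    intro x _ y hy
    rw [Finset.mem_filter] at hy
    exact mul_nonneg (mul_nonneg (hDpos x y hy.2).le (hγpos x y hy.2).le)
      (by linarith [hu0le y])
  have hI0nn : 0 ≤ I0 := by
    rw [hI0eq]
    exact Finset.sum_nonneg fun x hx => Finset.sum_nonneg (hterm_nn x hx)
  -- I0 ≠ 0 : otherwise the value 1 would propagate from A all the way to B
  have hI0ne : I0 ≠ 0 := by
    intro h0
    rw [hI0eq] at h0
    have hinner : ∀ x ∈ A, ∀ y, G x y → u0 y = 1 := by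
      intro x hxA y hG
      have h1 := (Finset.sum_eq_zero_iff_of_nonneg
        (fun x hx => Finset.sum_nonneg (hterm_nn x hx))).mp h0 x hxA
      have h2 := (Finset.sum_eq_zero_iff_of_nonneg (hterm_nn x hxA)).mp h1 y
        (Finset.mem_filter.mpr ⟨Finset.mem_univ y, hG⟩)
      have h3 : 0 < D x y * γ x y := mul_pos (hDpos x y hG) (hγpos x y hG)
      nlinarith
    have hprop1 : ∀ x, u0 x = 1 → ∀ y, G x y → u0 y = 1 := by
      intro x hx1 y hG
      by_cases hxA : x ∈ A
      · exact hinner x hxA y hG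
      · by_cases hxB : x ∈ B
        · rw [hu0B x hxB] at hx1; norm_num at hx1
        · have hxW : x ∉ W := by
            rw [hWdef, Finset.mem_union]; tauto
          -- 1 is the maximum value of u0
          exact prop_max G D γ hDpos hγpos hMarkovian u0 1 hu0le x
            (hharm0 x hxW) hx1 y hG
    have hpath : ∀ x, Relation.ReflTransGen G x b0 → u0 x = 1 → False := by
      intro x h
      induction h using Relation.ReflTransGen.head_induction_on with
      | refl =>
        intro h1
        rw [hu0B b0 hb0] at h1
        norm_num at h1
      | @head a c hac _ ih => exact fun h1 => ih (hprop1 a h1 c hac)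
    exact hpath a0 (hconn a0 b0) (hu0A a0 ha0)
  have hI0pos : 0 < I0 := lt_of_le_of_ne hI0nn (Ne.symm hI0ne)
  refine ⟨I0⁻¹, inv_pos.mpr hI0pos, ?_⟩
  intro UA UB u i ⟨hohm, hkir, hbd⟩
  -- the difference v between u and the superposition of reference solutions
  set v : V → ℝ := fun x => u x - (UA - UB) * u0 x - UB with hvdef
  have hharm_v : ∀ x ∉ W,
      ∑ y ∈ univ.filter (fun y => G x y), D x y * (γ y x * v x - γ x y * v y) = 0 := by
    intro x hx
    have hsplit : ∑ y ∈ univ.filter (fun y => G x y),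
        D x y * (γ y x * v x - γ x y * v y)
        = (∑ y ∈ univ.filter (fun y => G x y), D x y * (γ y x * u x - γ x y * u y))
          - (UA - UB) * (∑ y ∈ univ.filter (fun y => G x y),
              D x y * (γ y x * u0 x - γ x y * u0 y))
          - UB * ((∑ y ∈ univ.filter (fun y => G x y), D x y * γ y x)
              - ∑ y ∈ univ.filter (fun y => G x y), D x y * γ x y) := by
      simp only [mul_sub, Finset.mul_sum, ← Finset.sum_sub_distrib]
      refine Finset.sum_congr rfl fun y _ => ?_
      simp only [hvdef]
      ring
    have h1 : ∑ y ∈ univ.filter (fun y => G x y),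
        D x y * (γ y x * u x - γ x y * u y) = 0 := by
      rw [← hkir x hx]
      exact Finset.sum_congr rfl fun y hy =>
        (hohm x y (Finset.mem_filter.mp hy).2).symm
    rw [hsplit, h1, hharm0 x hx, ← hMarkovian x]
    ring
  have hbd_v : ∀ w ∈ W, v w = 0 := by
    intro w hw
    by_cases hwA : w ∈ A
    · have h1 : u w = UA := by simpa [hwA] using hbd w hw
      simp only [hvdef, h1, hu0A w hwA]
      ring
    · have hwB : w ∈ B := by
        rw [hWdef, Finset.mem_union] at hw; tauto
      have h1 : u w = UB := by simpa [hwA] using hbd w hw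
      simp only [hvdef, h1, hu0B w hwB]
      ring
  have hv0 : ∀ z, v z = 0 := zero_boundary G D γ hconn hDpos hγpos hMarkovian
    W hWne v hharm_v hbd_v
  have hu_eq : ∀ z, u z = (UA - UB) * u0 z + UB := by
    intro z
    have := hv0 z
    simp only [hvdef] at this
    linarith
  -- compute the total current into A
  have hiA : ∑ x ∈ A, ∑ y ∈ univ.filter (fun y => G x y), i x y = (UA - UB) * I0 := by
    rw [hI0def, Finset.mul_sum]
    refine Finset.sum_congr rfl fun x hxA => ?_
    have h1 : ∑ y ∈ univ.filter (fun y => G x y), i x y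
        = (UA - UB) * (∑ y ∈ univ.filter (fun y => G x y), i0 x y)
          + UB * ((∑ y ∈ univ.filter (fun y => G x y), D x y * γ y x)
              - ∑ y ∈ univ.filter (fun y => G x y), D x y * γ x y) := by
      simp only [mul_sub, Finset.mul_sum, ← Finset.sum_sub_distrib,
        ← Finset.sum_add_distrib]
      refine Finset.sum_congr rfl fun y hy => ?_
      have hG := (Finset.mem_filter.mp hy).2
      rw [hohm x y hG, hohm0 x y hG, hu_eq x, hu_eq y]
      ring
    rw [h1, ← hMarkovian x]
    ring
  rw [hiA, ← mul_assoc, mul_comm I0⁻¹, mul_assoc, inv_mul_cancel₀ hI0ne, mul_one]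
end

section
/- The effective resistance of a Markovian network is invariant under reversal: R̂^eff_{AB} = R^eff_{AB}, where the reversed network is obtained by replacing γ_{xy} by γ_{yx} (keeping D unchanged), for any disjoint nonempty A, B ⊆ V. -/
open Finset

variable {V : Type*} [Fintype V] [DecidableEq V]

/-- the effective resistance of a Markovian network is unchanged by
reversal (replacing `γ_{xy}` by `γ_{yx}`, keeping `D`): `R̂^eff_{AB} = R^eff_{AB}`. -/
theorem effective_resistance_reversal_invariant
    (G : V → V → Prop) [DecidableRel G]
    (hGsym : ∀ x y, G x y → G y x)
    (hconn : ∀ x y : V, Relation.ReflTransGen G x y)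
    (D γ : V → V → ℝ)
    (hDpos : ∀ x y, G x y → 0 < D x y)
    (hDsym : ∀ x y, D x y = D y x)
    (hγpos : ∀ x y, G x y → 0 < γ x y)
    (hγanti : ∀ x y, G x y → γ x y * γ y x = 1)
    (hγloop : ∀ x, G x x → γ x x = 1)
    (hMarkovian : ∀ x, ∑ z ∈ univ.filter (fun z => G x z), D x z * γ x z =
      ∑ z ∈ univ.filter (fun z => G x z), D x z * γ z x)
    (A B : Finset V) (hA : A.Nonempty) (hB : B.Nonempty) (hAB : Disjoint A B)
    (hex : ∀ U' : V → ℝ, ∃ u i, IsNetworkSolution G D γ (A ∪ B) U' u i)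
    (hexhat : ∀ U' : V → ℝ, ∃ u i,
      IsNetworkSolution G D (fun x y => γ y x) (A ∪ B) U' u i)
    (Reff Reffhat : ℝ) (hRpos : 0 < Reff) (hRhatpos : 0 < Reffhat)
    (hR : ∀ (UA UB : ℝ) (u : V → ℝ) (i : V → V → ℝ),
      IsNetworkSolution G D γ (A ∪ B) (fun x => if x ∈ A then UA else UB) u i →
      UA - UB = Reff * ∑ x ∈ A, ∑ y ∈ univ.filter (fun y => G x y), i x y)
    (hRhat : ∀ (UA UB : ℝ) (u : V → ℝ) (i : V → V → ℝ),
      IsNetworkSolution G D (fun x y => γ y x) (A ∪ B)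
        (fun x => if x ∈ A then UA else UB) u i →
      UA - UB = Reffhat * ∑ x ∈ A, ∑ y ∈ univ.filter (fun y => G x y), i x y) :
    Reffhat = Reff := by
  classical
  obtain ⟨u, i, hui⟩ := hex (fun x => if x ∈ A then (1:ℝ) else 0)
  obtain ⟨v, j, hvj⟩ := hexhat (fun x => if x ∈ A then (1:ℝ) else 0)
  obtain ⟨hiform, hidiv, hubd⟩ := hui
  obtain ⟨hjform, hjdiv, hvbd⟩ := hvj
  have hR1 : (1:ℝ) - 0 = Reff * ∑ x ∈ A, ∑ y ∈ univ.filter (fun y => G x y), i x y :=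
    hR 1 0 u i ⟨hiform, hidiv, hubd⟩
  have hR2 : (1:ℝ) - 0 = Reffhat * ∑ x ∈ A, ∑ y ∈ univ.filter (fun y => G x y), j x y :=
    hRhat 1 0 v j ⟨hjform, hjdiv, hvbd⟩
  have huA : ∀ x ∈ A, u x = 1 := fun x hx => by
    rw [hubd x (mem_union_left _ hx)]; simp [hx]
  have huB : ∀ x ∈ B, u x = 0 := fun x hx => by
    rw [hubd x (mem_union_right _ hx)]
    simp [Finset.disjoint_right.mp hAB hx]
  have hvA : ∀ x ∈ A, v x = 1 := fun x hx => by
    rw [hvbd x (mem_union_left _ hx)]; simp [hx]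
  have hvB : ∀ x ∈ B, v x = 0 := fun x hx => by
    rw [hvbd x (mem_union_right _ hx)]
    simp [Finset.disjoint_right.mp hAB hx]
  -- reciprocity identity
  have key : ∑ x, ∑ y ∈ univ.filter (fun y => G x y), (u x * j x y)
           = ∑ x, ∑ y ∈ univ.filter (fun y => G x y), (v x * i x y) := by
    rw [← sub_eq_zero, ← Finset.sum_sub_distrib]
    have step : ∀ x : V,
        (∑ y ∈ univ.filter (fun y => G x y), (u x * j x y))
        - (∑ y ∈ univ.filter (fun y => G x y), (v x * i x y))
        = (∑ y ∈ univ.filter (fun y => G x y),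
            ((D x y * γ x y - D x y * γ y x) * (u x * v x)))
          + ((∑ y ∈ univ.filter (fun y => G x y), D x y * γ x y * (v x * u y))
            - (∑ y ∈ univ.filter (fun y => G x y), D x y * γ y x * (u x * v y))) := by
      intro x
      rw [← Finset.sum_sub_distrib, ← Finset.sum_sub_distrib, ← Finset.sum_add_distrib]
      refine Finset.sum_congr rfl fun y hy => ?_
      have hG : G x y := (Finset.mem_filter.mp hy).2
      rw [hjform x y hG, hiform x y hG]; ring
    calc ∑ x, ((∑ y ∈ univ.filter (fun y => G x y), (u x * j x y))
            - (∑ y ∈ univ.filter (fun y => G x y), (v x * i x y)))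
        = ∑ x, ((∑ y ∈ univ.filter (fun y => G x y),
            ((D x y * γ x y - D x y * γ y x) * (u x * v x)))
          + ((∑ y ∈ univ.filter (fun y => G x y), D x y * γ x y * (v x * u y))
            - (∑ y ∈ univ.filter (fun y => G x y), D x y * γ y x * (u x * v y)))) :=
          Finset.sum_congr rfl fun x _ => step x
      _ = 0 := by
          rw [Finset.sum_add_distrib]
          have h1 : ∑ x, (∑ y ∈ univ.filter (fun y => G x y),
              ((D x y * γ x y - D x y * γ y x) * (u x * v x))) = 0 := by
            refine Finset.sum_eq_zero fun x _ => ?_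
            rw [← Finset.sum_mul, Finset.sum_sub_distrib, hMarkovian x, sub_self, zero_mul]
          have h2 : ∑ x, ((∑ y ∈ univ.filter (fun y => G x y), D x y * γ x y * (v x * u y))
              - (∑ y ∈ univ.filter (fun y => G x y), D x y * γ y x * (u x * v y))) = 0 := by
            rw [Finset.sum_sub_distrib, sub_eq_zero]
            have lhs' : ∑ x, ∑ y ∈ univ.filter (fun y => G x y), D x y * γ x y * (v x * u y)
                = ∑ x, ∑ y, if G x y then D x y * γ x y * (v x * u y) else 0 := by
              refine Finset.sum_congr rfl fun x _ => ?_
              rw [Finset.sum_filter]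
            have rhs' : ∑ x, ∑ y ∈ univ.filter (fun y => G x y), D x y * γ y x * (u x * v y)
                = ∑ x, ∑ y, if G x y then D x y * γ y x * (u x * v y) else 0 := by
              refine Finset.sum_congr rfl fun x _ => ?_
              rw [Finset.sum_filter]
            rw [lhs', rhs']
            rw [Finset.sum_comm (s := univ) (t := univ)
              (f := fun x y => if G x y then D x y * γ x y * (v x * u y) else 0)]
            refine Finset.sum_congr rfl fun x _ => Finset.sum_congr rfl fun y _ => ?_
            by_cases h : G x y
            · rw [if_pos h, if_pos (hGsym x y h), hDsym y x]; ring
            · rw [if_neg h, if_neg (fun h' => h (hGsym y x h'))]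
          rw [h1, h2, add_zero]
  -- evaluate both sides of reciprocity
  have lhs_eq : ∑ x, ∑ y ∈ univ.filter (fun y => G x y), (u x * j x y)
      = ∑ x ∈ A, ∑ y ∈ univ.filter (fun y => G x y), j x y := by
    have : ∀ x : V, ∑ y ∈ univ.filter (fun y => G x y), (u x * j x y)
        = if x ∈ A then ∑ y ∈ univ.filter (fun y => G x y), j x y else 0 := by
      intro x
      rw [← Finset.mul_sum]
      by_cases hxA : x ∈ A
      · rw [if_pos hxA, huA x hxA, one_mul]
      · rw [if_neg hxA]
        by_cases hxB : x ∈ B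
        · rw [huB x hxB, zero_mul]
        · rw [hjdiv x (by simp [Finset.mem_union, hxA, hxB]), mul_zero]
    rw [Finset.sum_congr rfl fun x _ => this x, Finset.sum_ite_mem, Finset.univ_inter]
  have rhs_eq : ∑ x, ∑ y ∈ univ.filter (fun y => G x y), (v x * i x y)
      = ∑ x ∈ A, ∑ y ∈ univ.filter (fun y => G x y), i x y := by
    have : ∀ x : V, ∑ y ∈ univ.filter (fun y => G x y), (v x * i x y)
        = if x ∈ A then ∑ y ∈ univ.filter (fun y => G x y), i x y else 0 := by
      intro x
      rw [← Finset.mul_sum]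
      by_cases hxA : x ∈ A
      · rw [if_pos hxA, hvA x hxA, one_mul]
      · rw [if_neg hxA]
        by_cases hxB : x ∈ B
        · rw [hvB x hxB, zero_mul]
        · rw [hidiv x (by simp [Finset.mem_union, hxA, hxB]), mul_zero]
    rw [Finset.sum_congr rfl fun x _ => this x, Finset.sum_ite_mem, Finset.univ_inter]
  have hIeq : ∑ x ∈ A, ∑ y ∈ univ.filter (fun y => G x y), j x y
      = ∑ x ∈ A, ∑ y ∈ univ.filter (fun y => G x y), i x y := by
    rw [← lhs_eq, ← rhs_eq]; exact key
  set IA := ∑ x ∈ A, ∑ y ∈ univ.filter (fun y => G x y), i x y with hIA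
  have hne : IA ≠ 0 := by
    intro h
    rw [h, mul_zero] at hR1
    norm_num at hR1
  have : Reffhat * IA = Reff * IA := by
    rw [← hIeq] at hR1 ⊢
    rw [← hR2, ← hR1]
  exact mul_right_cancel₀ hne this
end

section
/- Commute cost formula: for an irreducible finite Markov chain, vertices a ≠ b, and any cost function k on directed edges, the expected commute cost K^k_{ab} = H^k_{ab} + H^k_{ba} satisfies K^k_{ab} = R^eff_{ab} · D^k, where H^k_{xb} = E_x Σ_{t=1}^{τ_b^0} k_{X(t-1)X(t)}, D^k = Σ_{x∼y∈V} μ_x P_{xy} k_{xy} (sum over ordered adjacent pairs), and R^eff_{ab} is the effective resistance of the associated network between a and b. In particular for k ≡ 1, the expected commute time equals R^eff_{ab} · Σ_{x∼y∈V} μ_x P_{xy}. -/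
/-!
With `K := H a + H' b`, the function `F := H - H' + H' b` is harmonic off `{a, b}`, the
one-step costs cancelling, with `F a = K` and `F b = 0`; by the maximum principle `F = K • u`.
Summing the first-step equation of `H'` against the stationary `μ` gives
`μ a (H' - P H') a = μ a c a - μ ⬝ᵥ c`, where `c` is the mean one-step cost, so
`K · μ a (u - P u) a = μ a (F - P F) a = μ ⬝ᵥ c = D^k`. Finally, since `D_{xy} γ_{yx} = μ_y P_{yx}`,
the current leaving `x` is `μ x (u - P u) x`.
-/

open Finset Matrix

section Harmonic

variable {V : Type*} [Fintype V] {P : Matrix V V ℝ}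

theorem mulVec_const_of_sum_row_eq_one (hProw : ∀ x, ∑ y, P x y = 1) (c : ℝ) :
    P *ᵥ (fun _ => c) = fun _ => c := by
  funext x
  simp only [mulVec, dotProduct, ← sum_mul, hProw, one_mul]

theorem apply_eq_of_mulVec_eq_of_forall_le (hPnn : ∀ x y, 0 ≤ P x y)
    (hProw : ∀ x, ∑ y, P x y = 1) {w : V → ℝ} {x y : V} (hx : (P *ᵥ w) x = w x)
    (hmax : ∀ z, w z ≤ w x) (hxy : 0 < P x y) : w y = w x := by
  have hsum : ∑ z, P x z * (w x - w z) = 0 := by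
    simp only [mul_sub, sum_sub_distrib, ← sum_mul, hProw, one_mul]
    exact sub_eq_zero.2 hx.symm
  have hterm := (sum_eq_zero_iff_of_nonneg fun z _ =>
    mul_nonneg (hPnn x z) (sub_nonneg.2 (hmax z))).1 hsum y (mem_univ y)
  have := (mul_eq_zero.1 hterm).resolve_left hxy.ne'
  linarith

/-- Maximum principle: a maximum off `B` propagates along positive transitions into `B`. -/
theorem le_of_mulVec_eq_off (hPnn : ∀ x y, 0 ≤ P x y) (hProw : ∀ x, ∑ y, P x y = 1)
    {B : Set V} (hreach : ∀ x, ∃ b ∈ B, Relation.ReflTransGen (fun x y => 0 < P x y) x b)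
    {w : V → ℝ} (hw : ∀ x ∉ B, (P *ᵥ w) x = w x) {c : ℝ} (hc : ∀ x ∈ B, w x ≤ c) (x : V) :
    w x ≤ c := by
  obtain ⟨x₀, -, hx₀⟩ := exists_max_image univ w ⟨x, mem_univ x⟩
  obtain ⟨b, hb, hpath⟩ := hreach x₀
  suffices ∀ z, Relation.ReflTransGen (fun x y => 0 < P x y) z b → w z = w x₀ → w x₀ ≤ c from
    (hx₀ x (mem_univ x)).trans (this x₀ hpath rfl)
  intro z hz
  induction hz using Relation.ReflTransGen.head_induction_on with
  | refl => exact fun h => h ▸ hc b hb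
  | @head z z' hzz' _ ih =>
    intro hz
    by_cases hzB : z ∈ B
    · exact hz ▸ hc z hzB
    · refine ih ((apply_eq_of_mulVec_eq_of_forall_le hPnn hProw (hw z hzB) ?_ hzz').trans hz)
      exact fun y => hz ▸ hx₀ y (mem_univ y)

theorem eq_of_mulVec_eq_off (hPnn : ∀ x y, 0 ≤ P x y) (hProw : ∀ x, ∑ y, P x y = 1)
    {B : Set V} (hreach : ∀ x, ∃ b ∈ B, Relation.ReflTransGen (fun x y => 0 < P x y) x b)
    {v w : V → ℝ} (hv : ∀ x ∉ B, (P *ᵥ v) x = v x) (hw : ∀ x ∉ B, (P *ᵥ w) x = w x)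
    (hvw : ∀ x ∈ B, v x = w x) : v = w := by
  have hsub : ∀ {f g : V → ℝ}, (∀ x ∉ B, (P *ᵥ f) x = f x) → (∀ x ∉ B, (P *ᵥ g) x = g x) →
      ∀ x ∉ B, (P *ᵥ (f - g)) x = (f - g) x := fun hf hg x hx => by
    simp [mulVec_sub, hf x hx, hg x hx]
  funext x
  have h₁ := le_of_mulVec_eq_off hPnn hProw hreach (hsub hv hw) (c := 0)
    (fun x hx => by simp [hvw x hx]) x
  have h₂ := le_of_mulVec_eq_off hPnn hProw hreach (hsub hw hv) (c := 0)
    (fun x hx => by simp [hvw x hx]) x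
  simp only [Pi.sub_apply] at h₁ h₂
  linarith

end Harmonic

section Stationary

variable {V : Type*} [Fintype V] {P : Matrix V V ℝ} {μ : V → ℝ}

theorem dotProduct_sub_mulVec_eq_zero (hμ : μ ᵥ* P = μ) (f : V → ℝ) :
    μ ⬝ᵥ (f - P *ᵥ f) = 0 := by
  rw [dotProduct_sub, dotProduct_mulVec, hμ, sub_self]

theorem sub_mulVec_apply_eq_of_firstStep {k : V → V → ℝ} {H : V → ℝ} {x : V}
    (h : H x = ∑ y, P x y * (k x y + H y)) : (H - P *ᵥ H) x = ∑ y, P x y * k x y := by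
  simp only [mul_add, sum_add_distrib] at h
  simp only [Pi.sub_apply, mulVec, dotProduct]
  linarith

theorem mul_sub_mulVec_apply_eq_of_forall_ne (hμ : μ ᵥ* P = μ) {H c : V → ℝ} {b : V}
    (hH : ∀ x ≠ b, (H - P *ᵥ H) x = c x) :
    μ b * (H - P *ᵥ H) b = μ b * c b - μ ⬝ᵥ c := by
  have hsingle : μ ⬝ᵥ ((H - P *ᵥ H) - c) = μ b * ((H - P *ᵥ H) b - c b) :=
    Fintype.sum_eq_single b fun x hx => by simp [hH x hx]
  rw [dotProduct_sub, dotProduct_sub_mulVec_eq_zero hμ] at hsingle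
  linarith

end Stationary

section Network

theorem sqrt_mul_mul_sqrt_div_sub {p q : ℝ} (hp : 0 < p) (hq : 0 < q) (s t : ℝ) :
    √(p * q) * (√(q / p) * s - √(p / q) * t) = q * s - p * t := by
  have hqp : √(p * q) * √(q / p) = q := by
    rw [← Real.sqrt_mul (by positivity), show p * q * (q / p) = q ^ 2 by field_simp,
      Real.sqrt_sq hq.le]
  have hpq : √(p * q) * √(p / q) = p := by
    rw [← Real.sqrt_mul (by positivity), show p * q * (p / q) = p ^ 2 by field_simp,
      Real.sqrt_sq hp.le]
  linear_combination s * hqp - t * hpq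

variable {V : Type*} [Fintype V] {P : Matrix V V ℝ} {μ : V → ℝ}

theorem sum_filter_current_eq (hμ : μ ᵥ* P = μ) {G : V → V → Prop} [DecidableRel G]
    (hGsym : ∀ x y, G x y → G y x) (hPzero : ∀ x y, ¬ G x y → P x y = 0)
    {u : V → ℝ} {i : V → V → ℝ}
    (hi : ∀ x y, G x y → i x y = μ y * P y x * u x - μ x * P x y * u y) (x : V) :
    ∑ y ∈ univ.filter (fun y => G x y), i x y = μ x * (u - P *ᵥ u) x := by
  have hterm : ∀ y, (if G x y then i x y else 0) = μ y * P y x * u x - μ x * (P x y * u y) := by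
    intro y
    by_cases h : G x y
    · simp [h, hi x y h, mul_assoc]
    · simp [h, hPzero x y h, hPzero y x (mt (hGsym y x) h)]
  have hin : ∑ y, μ y * P y x = μ x := congr_fun hμ x
  rw [sum_filter, sum_congr rfl fun y _ => hterm y, sum_sub_distrib, ← sum_mul, ← mul_sum, hin]
  simp only [Pi.sub_apply, mulVec, dotProduct]
  ring

end Network

section Commute

variable {V : Type*} [Fintype V] {P : Matrix V V ℝ} {μ : V → ℝ} {a b : V}
  {H H' u c : V → ℝ}

theorem hittingCost_sub_eq_smul_potential (hPnn : ∀ x y, 0 ≤ P x y)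
    (hProw : ∀ x, ∑ y, P x y = 1)
    (hreach : ∀ x, ∃ z ∈ ({a, b} : Set V), Relation.ReflTransGen (fun x y => 0 < P x y) x z)
    (hHb : H b = 0) (hH : ∀ x ≠ b, (H - P *ᵥ H) x = c x)
    (hH'a : H' a = 0) (hH' : ∀ x ≠ a, (H' - P *ᵥ H') x = c x)
    (hu : ∀ x ∉ ({a, b} : Set V), (P *ᵥ u) x = u x) (hua : u a = 1) (hub : u b = 0) :
    H - H' + (fun _ => H' b) = (H a + H' b) • u := by
  have hLF : ∀ x ∉ ({a, b} : Set V), (P *ᵥ (H - H' + fun _ => H' b)) x = H x - H' x + H' b := by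
    intro x hx
    simp only [Set.mem_insert_iff, Set.mem_singleton_iff, not_or] at hx
    have hHx := hH x hx.2
    have hH'x := hH' x hx.1
    simp only [Pi.sub_apply] at hHx hH'x
    simp only [mulVec_add, mulVec_sub, mulVec_const_of_sum_row_eq_one hProw, Pi.add_apply,
      Pi.sub_apply]
    linarith
  refine eq_of_mulVec_eq_off hPnn hProw hreach hLF (fun x hx => ?_) ?_
  · rw [mulVec_smul, Pi.smul_apply, Pi.smul_apply, hu x hx]
  · simp [hua, hub, hHb, hH'a]

theorem commuteCost_mul_current_eq (hPnn : ∀ x y, 0 ≤ P x y) (hProw : ∀ x, ∑ y, P x y = 1)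
    (hμ : μ ᵥ* P = μ) (hab : a ≠ b)
    (hreach : ∀ x, ∃ z ∈ ({a, b} : Set V), Relation.ReflTransGen (fun x y => 0 < P x y) x z)
    (hHb : H b = 0) (hH : ∀ x ≠ b, (H - P *ᵥ H) x = c x)
    (hH'a : H' a = 0) (hH' : ∀ x ≠ a, (H' - P *ᵥ H') x = c x)
    (hu : ∀ x ∉ ({a, b} : Set V), (P *ᵥ u) x = u x) (hua : u a = 1) (hub : u b = 0) :
    (H a + H' b) * (μ a * (u - P *ᵥ u) a) = μ ⬝ᵥ c := by
  have hF := hittingCost_sub_eq_smul_potential hPnn hProw hreach hHb hH hH'a hH' hu hua hub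
  calc (H a + H' b) * (μ a * (u - P *ᵥ u) a)
      = μ a * ((H - P *ᵥ H) a - (H' - P *ᵥ H') a) := by
        have := congr_arg (fun f => (f - P *ᵥ f) a) hF
        simp only [mulVec_smul, mulVec_add, mulVec_sub, mulVec_const_of_sum_row_eq_one hProw,
          Pi.add_apply, Pi.sub_apply, Pi.smul_apply, smul_eq_mul] at this ⊢
        linear_combination -μ a * this
    _ = μ a * c a - μ a * (H' - P *ᵥ H') a := by rw [hH a hab, mul_sub]
    _ = μ ⬝ᵥ c := by rw [mul_sub_mulVec_apply_eq_of_forall_ne hμ hH']; ring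

end Commute

theorem commute_cost_formula_general {V : Type*} [Fintype V]
    (G : V → V → Prop) [DecidableRel G]
    (hGsym : ∀ x y, G x y → G y x)
    (hconn : ∀ x y : V, Relation.ReflTransGen G x y)
    (P : V → V → ℝ) (μ : V → ℝ)
    (hPpos : ∀ x y, G x y → 0 < P x y)
    (hPzero : ∀ x y, ¬ G x y → P x y = 0)
    (hProw : ∀ x, ∑ y, P x y = 1)
    (hμpos : ∀ x, 0 < μ x)
    (hstat : ∀ y, ∑ x, μ x * P x y = μ y)
    (D γ : V → V → ℝ)
    (hD : ∀ x y, D x y = Real.sqrt (μ x * P x y * (μ y * P y x)))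
    (hγ : ∀ x y, γ x y = Real.sqrt (μ x * P x y / (μ y * P y x)))
    (a b : V) (hab : a ≠ b)
    (k : V → V → ℝ)
    -- H x = H^k_{xb}, the expected cost from x until hitting b
    (H : V → ℝ) (hHb : H b = 0)
    (hHstep : ∀ x, x ≠ b → H x = ∑ y, P x y * (k x y + H y))
    -- H' x = H^k_{xa}, the expected cost from x until hitting a
    (H' : V → ℝ) (hH'a : H' a = 0)
    (hH'step : ∀ x, x ≠ a → H' x = ∑ y, P x y * (k x y + H' y))
    -- the network solution with boundary potential 1 at a, 0 at b
    (u : V → ℝ) (i : V → V → ℝ)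
    (hohm : ∀ x y, G x y → i x y = D x y * (γ y x * u x - γ x y * u y))
    (hkir : ∀ x, x ≠ a → x ≠ b → ∑ y ∈ univ.filter (fun y => G x y), i x y = 0)
    (hua : u a = 1) (hub : u b = 0)
    (Reff : ℝ)
    (hReff : Reff * ∑ y ∈ univ.filter (fun y => G a y), i a y = 1) :
    H a + H' b = Reff * ∑ x, ∑ y ∈ univ.filter (fun y => G x y), μ x * P x y * k x y := by
  -- so that the `Matrix.mulVec` API applies to `P`
  change Matrix V V ℝ at P
  have hPnn : ∀ x y, 0 ≤ P x y := fun x y =>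
    if h : G x y then (hPpos x y h).le else (hPzero x y h).ge
  have hμP : μ ᵥ* P = μ := funext hstat
  have hreach : ∀ x, ∃ z ∈ ({a, b} : Set V), Relation.ReflTransGen (fun x y => 0 < P x y) x z :=
    fun x => ⟨a, by simp, Relation.ReflTransGen.mono hPpos _ _ (hconn x a)⟩
  have hI := sum_filter_current_eq hμP hGsym hPzero (u := u) (i := i) fun x y hxy => by
    rw [hohm x y hxy, hD, hγ, hγ, sqrt_mul_mul_sqrt_div_sub (mul_pos (hμpos x) (hPpos x y hxy))
      (mul_pos (hμpos y) (hPpos y x (hGsym x y hxy)))]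
  have hu : ∀ x ∉ ({a, b} : Set V), (P *ᵥ u) x = u x := fun x hx => by
    simp only [Set.mem_insert_iff, Set.mem_singleton_iff, not_or] at hx
    have := hkir x hx.1 hx.2
    rw [hI, mul_eq_zero, or_iff_right (hμpos x).ne', Pi.sub_apply, sub_eq_zero] at this
    exact this.symm
  have hKI := commuteCost_mul_current_eq hPnn hProw hμP hab hreach hHb
    (fun x hx => sub_mulVec_apply_eq_of_firstStep (hHstep x hx)) hH'a
    (fun x hx => sub_mulVec_apply_eq_of_firstStep (hH'step x hx)) hu hua hub
  have hDk : ∑ x, ∑ y ∈ univ.filter (fun y => G x y), μ x * P x y * k x y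
      = μ ⬝ᵥ fun x => ∑ y, P x y * k x y := by
    simp only [dotProduct, mul_sum, ← mul_assoc]
    exact sum_congr rfl fun x _ => sum_filter_of_ne fun y _ hy =>
      by_contra fun h => hy (by simp [hPzero x y h])
  rw [hDk, ← hKI, ← hI a]
  linear_combination -(H a + H' b) * hReff

/-- the commute cost formula `K^k_{ab} = R^eff_{ab} · D^k`.
The expected costs `H^k_{·b}` and `H^k_{·a}` are characterised by their
first-step equations; `R^eff_{ab}` is the effective resistance of the associated
network between `a` and `b`, characterised by `R^eff_{ab} · i_a = 1` for the
solution with boundary potential 1 at `a` and 0 at `b`;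
`D^k = Σ_{x∼y} μ_x P_{xy} k_{xy}`. -/
theorem commute_cost_formula {V : Type*} [Fintype V] [DecidableEq V]
    (G : V → V → Prop) [DecidableRel G]
    (hGsym : ∀ x y, G x y → G y x)
    (hconn : ∀ x y : V, Relation.ReflTransGen G x y)
    (P : V → V → ℝ) (μ : V → ℝ)
    (hPpos : ∀ x y, G x y → 0 < P x y)
    (hPzero : ∀ x y, ¬ G x y → P x y = 0)
    (hProw : ∀ x, ∑ y, P x y = 1)
    (hμpos : ∀ x, 0 < μ x)
    (hμsum : ∑ x, μ x = 1)
    (hstat : ∀ y, ∑ x, μ x * P x y = μ y)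
    (D γ : V → V → ℝ)
    (hD : ∀ x y, D x y = Real.sqrt (μ x * P x y * (μ y * P y x)))
    (hγ : ∀ x y, γ x y = Real.sqrt (μ x * P x y / (μ y * P y x)))
    (a b : V) (hab : a ≠ b)
    (k : V → V → ℝ)
    -- H x = H^k_{xb}, the expected cost from x until hitting b
    (H : V → ℝ) (hHb : H b = 0)
    (hHstep : ∀ x, x ≠ b → H x = ∑ y, P x y * (k x y + H y))
    -- H' x = H^k_{xa}, the expected cost from x until hitting a
    (H' : V → ℝ) (hH'a : H' a = 0)
    (hH'step : ∀ x, x ≠ a → H' x = ∑ y, P x y * (k x y + H' y))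
    -- the network solution with boundary potential 1 at a, 0 at b
    (u : V → ℝ) (i : V → V → ℝ)
    (hohm : ∀ x y, G x y → i x y = D x y * (γ y x * u x - γ x y * u y))
    (hkir : ∀ x, x ≠ a → x ≠ b → ∑ y ∈ univ.filter (fun y => G x y), i x y = 0)
    (hua : u a = 1) (hub : u b = 0)
    (Reff : ℝ)
    (hReff : Reff * ∑ y ∈ univ.filter (fun y => G a y), i a y = 1) :
    H a + H' b = Reff * ∑ x, ∑ y ∈ univ.filter (fun y => G x y), μ x * P x y * k x y :=
  commute_cost_formula_general G hGsym hconn P μ hPpos hPzero hProw hμpos hstat D γ hD hγ a b hab k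
    H hHb hHstep H' hH'a hH'step u i hohm hkir hua hub Reff hReff
end
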